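/- Let c : ℝⁿ → ℝᵐ and g : ℝⁿ → ℝᵏ be continuously differentiable, f locally Lipschitz, and x a point with g_j(x) = 0 for j in an index set 𝒥. Suppose 0 ∈ ∂f(x) + ∇c(x)ℝᵐ + ∇g_𝒥(x)ℝ^{|𝒥|} (x is in the stable set) but 0 ∉ ∂f(x) + ∇c(x)ℝᵐ + ∇g_𝒥(x)ℝ₊^{|𝒥|} (x is not a KKT point). Then there exists u ∈ ℝⁿ with ∇c(x)ᵀu = 0, ⟨u, ∇g_j(x)⟩ ≤ 0 for all j ∈ 𝒥, and ⟨u, d⟩ < 0 for all d ∈ ∂f(x). -/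

import Mathlib

/-!
The limiting gradients of a locally Lipschitz function at `x` are bounded by a local Lipschitz
constant and form a closed set, so by Carathéodory their convex hull `∂f(x)` is compact. If `x` is
not a KKT point, the compact convex set `∂f(x)` is disjoint from the closed convex cone `-C`,
`C = ∇c(x)ℝᵐ + ∇g_𝒥(x)ℝ₊^{|𝒥|}`, and a strictly separating functional `u` is negative on `∂f(x)`
and, since `C` is a cone, nonpositive on `C`; nonpositivity on the subspace `∇c(x)ℝᵐ ⊆ C` forces
`∇c(x)ᵀu = 0`.
-/

open Matrix Filter Topology

noncomputable def clarkeSubdiff {n : ℕ} (f : (Fin n → ℝ) → ℝ) (x : Fin n → ℝ) :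
    Set (Fin n → ℝ) :=
  convexHull ℝ {v | ∃ u : ℕ → Fin n → ℝ, (∀ k, DifferentiableAt ℝ f (u k)) ∧
    Tendsto u atTop (𝓝 x) ∧
    ∀ w : Fin n → ℝ, Tendsto (fun k => fderiv ℝ f (u k) w) atTop (𝓝 (v ⬝ᵥ w))}

noncomputable def gradVec {n : ℕ} (φ : (Fin n → ℝ) → ℝ) (x : Fin n → ℝ) : Fin n → ℝ :=
  fun i => fderiv ℝ φ x (Pi.single i 1)

section ConvexHull

open Module Function

variable {E : Type*} [AddCommGroup E] [Module ℝ E]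

theorem convexHull_subset_image_stdSimplex [FiniteDimensional ℝ E] {s : Set E}
    (hs : s.Nonempty) :
    convexHull ℝ s ⊆ (fun p : (Fin (finrank ℝ E + 1) → ℝ) × (Fin (finrank ℝ E + 1) → E) =>
      ∑ i, p.1 i • p.2 i) '' (stdSimplex ℝ _ ×ˢ Set.univ.pi fun _ => s) := by
  obtain ⟨x₀, hx₀⟩ := hs
  intro y hy
  obtain ⟨ι, _, z, w, hzs, hind, hwpos, hwsum, rfl⟩ := eq_pos_convex_span_of_mem_convexHull hy
  have hcard : Fintype.card ι ≤ Fintype.card (Fin (finrank ℝ E + 1)) := by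
    simpa using hind.card_le_finrank_succ.trans (Nat.succ_le_succ (Submodule.finrank_le _))
  obtain ⟨e⟩ := Embedding.nonempty_of_card_le hcard
  -- pad the combination with zero weights on the indices outside the image of `e`
  have hw : ∀ j, 0 ≤ extend e w 0 j := fun j => by
    rcases Set.range_extend_subset e w 0 ⟨j, rfl⟩ with ⟨i, hi⟩ | ⟨_, _, hj⟩
    · exact hi ▸ (hwpos i).le
    · exact hj ▸ le_rfl
  have hz : ∀ j, extend e z (fun _ => x₀) j ∈ s := fun j => by
    rcases Set.range_extend_subset e z _ ⟨j, rfl⟩ with ⟨i, hi⟩ | ⟨_, _, hj⟩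
    · exact hi ▸ hzs ⟨i, rfl⟩
    · exact hj ▸ hx₀
  refine ⟨(extend e w 0, extend e z fun _ => x₀), ⟨⟨hw, ?_⟩, fun j _ => hz j⟩, ?_⟩
  · rw [← hwsum]
    refine (Fintype.sum_of_injective e e.injective _ _ (fun j hj => ?_) fun i => ?_).symm
    · exact extend_apply' _ _ _ (by simpa using hj)
    · exact (e.injective.extend_apply _ _ _).symm
  · refine (Fintype.sum_of_injective e e.injective _ _ (fun j hj => ?_) fun i => ?_).symm
    · simp [extend_apply' _ _ _ (by simpa using hj : ¬∃ i, e i = j)]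
    · simp [e.injective.extend_apply]

protected theorem IsCompact.convexHull [TopologicalSpace E] [ContinuousAdd E]
    [ContinuousSMul ℝ E] [FiniteDimensional ℝ E] {s : Set E} (hs : IsCompact s) :
    IsCompact (convexHull ℝ s) := by
  rcases s.eq_empty_or_nonempty with rfl | hne
  · simp
  have himage : convexHull ℝ s = _ :=
    (convexHull_subset_image_stdSimplex hne).antisymm <| by
      rintro _ ⟨⟨w, z⟩, ⟨⟨hw₀, hw₁⟩, hz⟩, rfl⟩
      exact (convex_convexHull ℝ s).sum_mem (fun i _ => hw₀ i) hw₁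
        fun i _ => subset_convexHull ℝ s (hz i trivial)
  rw [himage]
  exact ((isCompact_stdSimplex ℝ _).prod (isCompact_univ_pi fun _ => hs)).image (by fun_prop)

end ConvexHull

theorem LinearMap.dotProduct_apply_single {ι : Type*} [Fintype ι] [DecidableEq ι]
    (ℓ : (ι → ℝ) →ₗ[ℝ] ℝ) (w : ι → ℝ) : (fun i => ℓ (Pi.single i 1)) ⬝ᵥ w = ℓ w := by
  simp [ℓ.pi_apply_eq_sum_univ w, dotProduct, mul_comm, ← Pi.single_apply, Pi.single_comm]

theorem tendsto_dotProduct_iff {α ι : Type*} [Fintype ι] [DecidableEq ι] {l : Filter α}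
    {a : α → ι → ℝ} {v : ι → ℝ} :
    (∀ w, Tendsto (fun k => a k ⬝ᵥ w) l (𝓝 (v ⬝ᵥ w))) ↔ Tendsto a l (𝓝 v) := by
  refine ⟨fun h => tendsto_pi_nhds.2 fun i => ?_, fun h w => ?_⟩
  · simpa using h (Pi.single i 1)
  · exact ((continuous_id.dotProduct continuous_const).tendsto v).comp h

section Gradient

variable {n : ℕ}

theorem fderiv_apply_eq_gradVec_dotProduct (φ : (Fin n → ℝ) → ℝ) (y w : Fin n → ℝ) :
    fderiv ℝ φ y w = gradVec φ y ⬝ᵥ w :=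
  ((fderiv ℝ φ y).toLinearMap.dotProduct_apply_single w).symm

theorem norm_gradVec_le (φ : (Fin n → ℝ) → ℝ) (y : Fin n → ℝ) :
    ‖gradVec φ y‖ ≤ ‖fderiv ℝ φ y‖ :=
  pi_norm_le_iff_of_nonneg (norm_nonneg _) |>.2 fun i =>
    ((fderiv ℝ φ y).le_opNorm _).trans (by rw [Pi.norm_single, norm_one, mul_one])

def gradientGraph (f : (Fin n → ℝ) → ℝ) : Set ((Fin n → ℝ) × (Fin n → ℝ)) :=
  {p | DifferentiableAt ℝ f p.1 ∧ gradVec f p.1 = p.2}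

-- limits of gradients at points of differentiability tending to `x`, read off as the slice at `x`
-- of the closed set `closure (gradientGraph f)`
def bouligandSubdiff (f : (Fin n → ℝ) → ℝ) (x : Fin n → ℝ) : Set (Fin n → ℝ) :=
  {v | (x, v) ∈ closure (gradientGraph f)}

theorem clarkeSubdiff_eq_convexHull_bouligandSubdiff (f : (Fin n → ℝ) → ℝ) (x : Fin n → ℝ) :
    clarkeSubdiff f x = convexHull ℝ (bouligandSubdiff f x) := by
  refine congrArg _ (Set.ext fun v => ?_)
  simp only [bouligandSubdiff, Set.mem_ofPred_eq, mem_closure_iff_seq_limit,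
    fderiv_apply_eq_gradVec_dotProduct, tendsto_dotProduct_iff]
  constructor
  · rintro ⟨u, hdiff, hux, hgrad⟩
    exact ⟨fun k => (u k, gradVec f (u k)), fun k => ⟨hdiff k, rfl⟩, hux.prodMk_nhds hgrad⟩
  · rintro ⟨p, hp, hpx⟩
    refine ⟨fun k => (p k).1, fun k => (hp k).1, hpx.fst_nhds, ?_⟩
    simpa only [(hp _).2] using hpx.snd_nhds

theorem isCompact_bouligandSubdiff {f : (Fin n → ℝ) → ℝ} (hf : LocallyLipschitz f)
    (x : Fin n → ℝ) : IsCompact (bouligandSubdiff f x) := by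
  obtain ⟨K, t, ht, hK⟩ := hf x
  obtain ⟨ε, hε, hball⟩ := Metric.mem_nhds_iff.1 ht
  have hbounded : Metric.ball x ε ×ˢ Set.univ ∩ gradientGraph f ⊆
      Set.univ ×ˢ Metric.closedBall 0 K := by
    rintro ⟨y, _⟩ ⟨⟨hy, -⟩, -, rfl : gradVec f y = _⟩
    refine ⟨trivial, mem_closedBall_zero_iff.2 <| (norm_gradVec_le f y).trans ?_⟩
    exact norm_fderiv_le_of_lipschitzOn ℝ (Metric.isOpen_ball.mem_nhds hy) (hK.mono hball)
  refine (isCompact_closedBall (0 : Fin n → ℝ) K).of_isClosed_subset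
    (isClosed_closure.preimage (by fun_prop)) fun v hv => ?_
  have : (x, v) ∈ closure (Set.univ ×ˢ Metric.closedBall (0 : Fin n → ℝ) K) :=
    closure_mono hbounded <| (Metric.isOpen_ball.prod isOpen_univ).inter_closure
      ⟨⟨Metric.mem_ball_self hε, trivial⟩, hv⟩
  simpa [closure_prod_eq, Metric.isClosed_closedBall.closure_eq] using this

theorem isCompact_clarkeSubdiff {f : (Fin n → ℝ) → ℝ} (hf : LocallyLipschitz f)
    (x : Fin n → ℝ) : IsCompact (clarkeSubdiff f x) := by
  rw [clarkeSubdiff_eq_convexHull_bouligandSubdiff]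
  exact (isCompact_bouligandSubdiff hf x).convexHull

end Gradient

section Separation

variable {E : Type*} [TopologicalSpace E] [AddCommGroup E] [IsTopologicalAddGroup E]
  [Module ℝ E] [ContinuousSMul ℝ E] [LocallyConvexSpace ℝ E]

theorem exists_strongDual_neg_of_disjoint_neg_pointedCone {K : Set E} (hKconv : Convex ℝ K)
    (hKcomp : IsCompact K) {C : PointedCone ℝ E} (hC : IsClosed (C : Set E))
    (hdisj : Disjoint K (-(C : Set E))) :
    ∃ φ : StrongDual ℝ E, (∀ w ∈ C, φ w ≤ 0) ∧ ∀ d ∈ K, φ d < 0 := by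
  obtain ⟨φ, s, t, hK, hst, hC'⟩ :=
    geometric_hahn_banach_compact_closed hKconv hKcomp C.convex.neg hC.neg hdisj
  have ht : t < 0 := by simpa using hC' 0 (by simp)
  refine ⟨φ, fun w hw => ?_, fun d hd => (hK d hd).trans (hst.trans ht)⟩
  by_contra! hpos
  -- `-(r • w)` lies in `-C` for every `r ≥ 0`, but for `r = -t / φ w` its value under `φ` is `t`
  have hr : 0 ≤ -t / φ w := div_nonneg (by linarith) hpos.le
  have := hC' (-((-t / φ w) • w)) (by simpa using C.smul_mem hr hw)
  rw [map_neg, map_smul, smul_eq_mul, div_mul_cancel₀ _ hpos.ne'] at this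
  linarith

end Separation

section MultiplierCone

variable {E ι κ : Type*} [AddCommGroup E] [Module ℝ E] [Fintype ι] [Fintype κ]

def multiplierCone (a : ι → E) (b : κ → E) (J : Set κ) : PointedCone ℝ E where
  carrier := {w | ∃ (μ : ι → ℝ) (lam : κ → ℝ), (∀ j, j ∉ J → lam j = 0) ∧ (∀ j, 0 ≤ lam j) ∧
    w = (∑ i, μ i • a i) + ∑ j, lam j • b j}
  add_mem' := by
    rintro _ _ ⟨μ, lam, hJ, hpos, rfl⟩ ⟨μ', lam', hJ', hpos', rfl⟩
    refine ⟨μ + μ', lam + lam', fun j hj => by simp [hJ j hj, hJ' j hj],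
      fun j => add_nonneg (hpos j) (hpos' j), ?_⟩
    simp only [Pi.add_apply, add_smul, Finset.sum_add_distrib]
    abel
  zero_mem' := ⟨0, 0, fun _ _ => rfl, fun _ => le_rfl, by simp⟩
  smul_mem' := by
    rintro ⟨r, hr⟩ _ ⟨μ, lam, hJ, hpos, rfl⟩
    refine ⟨r • μ, r • lam, fun j hj => by simp [hJ j hj], fun j => mul_nonneg hr (hpos j), ?_⟩
    simp [Nonneg.mk_smul, smul_add, Finset.smul_sum, smul_smul]

variable (a : ι → E) (b : κ → E) {J : Set κ}

theorem smul_mem_multiplierCone [DecidableEq ι] (i : ι) (t : ℝ) : t • a i ∈ multiplierCone a b J :=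
  ⟨Pi.single i t, 0, fun _ _ => rfl, fun _ => le_rfl, by simp [Pi.single_apply, ite_smul]⟩

theorem mem_multiplierCone [DecidableEq κ] {j : κ} (hj : j ∈ J) : b j ∈ multiplierCone a b J := by
  refine ⟨0, Pi.single j 1, fun j' hj' => ?_, fun j' => ?_, by simp [Pi.single_apply, ite_smul]⟩
  · exact Pi.single_eq_of_ne (ne_of_mem_of_not_mem hj hj').symm _
  · by_cases h : j' = j <;> simp [h]

end MultiplierCone

theorem stmt7_general {n m k : ℕ} (f : (Fin n → ℝ) → ℝ) (hf : LocallyLipschitz f)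
    (c : (Fin n → ℝ) → Fin m → ℝ) (g : (Fin n → ℝ) → Fin k → ℝ)
    (x : Fin n → ℝ) (J : Set (Fin k))
    (hClosed : IsClosed {w : Fin n → ℝ | ∃ (μ : Fin m → ℝ) (lam : Fin k → ℝ),
      (∀ j, j ∉ J → lam j = 0) ∧ (∀ j, 0 ≤ lam j) ∧
      w = (∑ i, μ i • gradVec (fun y => c y i) x) +
          (∑ j, lam j • gradVec (fun y => g y j) x)})
    (hNotKKT : ¬ ∃ d ∈ clarkeSubdiff f x, ∃ (μ : Fin m → ℝ) (lam : Fin k → ℝ),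
      (∀ j, j ∉ J → lam j = 0) ∧ (∀ j, 0 ≤ lam j) ∧
      d + (∑ i, μ i • gradVec (fun y => c y i) x) +
          (∑ j, lam j • gradVec (fun y => g y j) x) = 0) :
    ∃ u : Fin n → ℝ, (∀ i, gradVec (fun y => c y i) x ⬝ᵥ u = 0) ∧
      (∀ j ∈ J, u ⬝ᵥ gradVec (fun y => g y j) x ≤ 0) ∧
      ∀ d ∈ clarkeSubdiff f x, u ⬝ᵥ d < 0 := by
  set a := fun i => gradVec (fun y => c y i) x
  set b := fun j => gradVec (fun y => g y j) x
  have hdisj : Disjoint (clarkeSubdiff f x) (-(multiplierCone a b J : Set (Fin n → ℝ))) :=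
    Set.disjoint_left.2 fun d hd ⟨μ, lam, hJ, hpos, hneg⟩ =>
      hNotKKT ⟨d, hd, μ, lam, hJ, hpos, by rw [add_assoc, ← hneg, add_neg_cancel]⟩
  obtain ⟨φ, hφC, hφK⟩ := exists_strongDual_neg_of_disjoint_neg_pointedCone
    (convex_convexHull ℝ _) (isCompact_clarkeSubdiff hf x) hClosed hdisj
  have hφ (w : Fin n → ℝ) : (fun i => φ (Pi.single i 1)) ⬝ᵥ w = φ w :=
    φ.toLinearMap.dotProduct_apply_single w
  refine ⟨fun i => φ (Pi.single i 1), fun i => ?_, fun j hj => ?_, fun d hd => ?_⟩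
  · have hpos := hφC _ (smul_mem_multiplierCone a b (J := J) i 1)
    have hneg := hφC _ (smul_mem_multiplierCone a b (J := J) i (-1))
    rw [dotProduct_comm, hφ]
    simp only [one_smul, neg_smul, map_neg] at hpos hneg
    linarith
  · exact (hφ _).trans_le (hφC _ (mem_multiplierCone a b hj))
  · exact (hφ d).trans_lt (hφK d hd)

/-- If `x` is in the stable set
`0 ∈ ∂f(x) + ∇c(x)ℝᵐ + ∇g_𝒥(x)ℝ^{|𝒥|}` but is not a KKT point
(`0 ∉ ∂f(x) + ∇c(x)ℝᵐ + ∇g_𝒥(x)ℝ₊^{|𝒥|}`, the latter a closed convex cone), then there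
is `u` with `∇c(x)ᵀu = 0`, `⟨u, ∇g_j(x)⟩ ≤ 0` for `j ∈ 𝒥`, and `⟨u, d⟩ < 0` on `∂f(x)`. -/
theorem stmt7 {n m k : ℕ} (f : (Fin n → ℝ) → ℝ) (hf : LocallyLipschitz f)
    (c : (Fin n → ℝ) → Fin m → ℝ) (g : (Fin n → ℝ) → Fin k → ℝ)
    (hc : ContDiff ℝ 1 c) (hg : ContDiff ℝ 1 g)
    (x : Fin n → ℝ) (J : Set (Fin k)) (hJ : ∀ j ∈ J, g x j = 0)
    (hClosed : IsClosed {w : Fin n → ℝ | ∃ (μ : Fin m → ℝ) (lam : Fin k → ℝ),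
      (∀ j, j ∉ J → lam j = 0) ∧ (∀ j, 0 ≤ lam j) ∧
      w = (∑ i, μ i • gradVec (fun y => c y i) x) +
          (∑ j, lam j • gradVec (fun y => g y j) x)})
    (hStable : ∃ d ∈ clarkeSubdiff f x, ∃ (μ : Fin m → ℝ) (lam : Fin k → ℝ),
      (∀ j, j ∉ J → lam j = 0) ∧
      d + (∑ i, μ i • gradVec (fun y => c y i) x) +
          (∑ j, lam j • gradVec (fun y => g y j) x) = 0)
    (hNotKKT : ¬ ∃ d ∈ clarkeSubdiff f x, ∃ (μ : Fin m → ℝ) (lam : Fin k → ℝ),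
      (∀ j, j ∉ J → lam j = 0) ∧ (∀ j, 0 ≤ lam j) ∧
      d + (∑ i, μ i • gradVec (fun y => c y i) x) +
          (∑ j, lam j • gradVec (fun y => g y j) x) = 0) :
    ∃ u : Fin n → ℝ, (∀ i, gradVec (fun y => c y i) x ⬝ᵥ u = 0) ∧
      (∀ j ∈ J, u ⬝ᵥ gradVec (fun y => g y j) x ≤ 0) ∧
      ∀ d ∈ clarkeSubdiff f x, u ⬝ᵥ d < 0 :=
  stmt7_general f hf c g x J hClosed hNotKKT
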